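/- Let $(\mathcal{A},[~,~])$ be a mock-Lie algebra and $r = \sum_i r^1_i\otimes r^2_i \in \mathcal{A}\otimes\mathcal{A}$ an antisymmetric element (i.e. $\tau(r)=-r$). Define $\Delta_r(x) = [x,r^1]\otimes r^2 - r^1\otimes[x,r^2]$. Then $(\mathcal{A},[~,~],\Delta_r)$ is a quasitriangular mock-Lie bialgebra (i.e. $r$ solves the classical mock-Lie Yang-Baxter equation) if and only if $(\Delta_r\otimes\mathrm{id})(r) = -r^1\otimes\bar r^1\otimes[r^2,\bar r^2]$. -/

import Mathlib

/- Expanding `Δ_r` and using commutativity of the bracket, `(Δ_r ⊗ id)(r)` is the sum of the first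
and third terms of the classical mock-Lie Yang-Baxter equation; so the equation says exactly that
the remaining term `r¹ ⊗ r̄¹ ⊗ [r², r̄²]` is its negative. -/

open TensorProduct

/-- `Δ_r(x) = [x,r¹]⊗r² - r¹⊗[x,r²]` for `r = ∑ i, r1 i ⊗ r2 i`. -/
noncomputable def DeltaR {K A ι : Type*} [Field K] [AddCommGroup A] [Module K A] [Fintype ι]
    (b : A →ₗ[K] A →ₗ[K] A) (r1 r2 : ι → A) (x : A) : A ⊗[K] A :=
  ∑ i, (b x (r1 i)) ⊗ₜ[K] r2 i - ∑ i, r1 i ⊗ₜ[K] (b x (r2 i))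

theorem assoc_sum_deltaR_tmul {K A ι : Type*} [Field K] [AddCommGroup A] [Module K A]
    [Fintype ι] (b : A →ₗ[K] A →ₗ[K] A) (hcomm : ∀ x y : A, b x y = b y x) (r1 r2 : ι → A) :
    TensorProduct.assoc K A A A (∑ i, DeltaR b r1 r2 (r1 i) ⊗ₜ[K] r2 i) =
      ∑ i, ∑ j, b (r1 i) (r1 j) ⊗ₜ[K] (r2 i ⊗ₜ[K] r2 j) -
        ∑ i, ∑ j, r1 i ⊗ₜ[K] (b (r1 j) (r2 i) ⊗ₜ[K] r2 j) := by
  simp only [DeltaR, sub_tmul, sum_tmul, map_sum, map_sub, assoc_tmul, Finset.sum_sub_distrib]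
  congr 1
  · rw [Finset.sum_comm]
    exact Finset.sum_congr rfl fun i _ => Finset.sum_congr rfl fun j _ => by rw [hcomm]
  · exact Finset.sum_comm

theorem stmt5_general {K A ι : Type*} [Field K]
    [AddCommGroup A] [Module K A] [Fintype ι]
    (b : A →ₗ[K] A →ₗ[K] A)
    (hcomm : ∀ x y : A, b x y = b y x)
    (r1 r2 : ι → A) :
    (∑ i, ∑ j, (b (r1 i) (r1 j)) ⊗ₜ[K] (r2 i ⊗ₜ[K] r2 j) +
     ∑ i, ∑ j, r1 i ⊗ₜ[K] (r1 j ⊗ₜ[K] (b (r2 i) (r2 j))) -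
     ∑ i, ∑ j, r1 i ⊗ₜ[K] ((b (r1 j) (r2 i)) ⊗ₜ[K] r2 j) = 0) ↔
    ((TensorProduct.assoc K A A A) (∑ i, (DeltaR b r1 r2 (r1 i)) ⊗ₜ[K] r2 i) =
      - ∑ i, ∑ j, r1 i ⊗ₜ[K] (r1 j ⊗ₜ[K] (b (r2 i) (r2 j)))) := by
  rw [assoc_sum_deltaR_tmul b hcomm, add_sub_right_comm, eq_neg_iff_add_eq_zero]

/-- For an antisymmetric `r`, `(A,[,],r,Δ_r)` is a quasitriangular mock-Lie bialgebra
(i.e. `r` solves the classical mock-Lie Yang-Baxter equation) iff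
`(Δ_r ⊗ id)(r) = -r¹⊗r̄¹⊗[r²,r̄²]`. -/
theorem stmt5 {K A ι : Type*} [Field K] [CharZero K]
    [AddCommGroup A] [Module K A] [Fintype ι]
    (b : A →ₗ[K] A →ₗ[K] A)
    (hcomm : ∀ x y : A, b x y = b y x)
    (hjac : ∀ x y z : A, b x (b y z) + b y (b z x) + b z (b x y) = 0)
    (r1 r2 : ι → A)
    (hanti : (TensorProduct.comm K A A) (∑ i, r1 i ⊗ₜ[K] r2 i) =
      - ∑ i, r1 i ⊗ₜ[K] r2 i) :
    (∑ i, ∑ j, (b (r1 i) (r1 j)) ⊗ₜ[K] (r2 i ⊗ₜ[K] r2 j) +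
     ∑ i, ∑ j, r1 i ⊗ₜ[K] (r1 j ⊗ₜ[K] (b (r2 i) (r2 j))) -
     ∑ i, ∑ j, r1 i ⊗ₜ[K] ((b (r1 j) (r2 i)) ⊗ₜ[K] r2 j) = 0) ↔
    ((TensorProduct.assoc K A A A) (∑ i, (DeltaR b r1 r2 (r1 i)) ⊗ₜ[K] r2 i) =
      - ∑ i, ∑ j, r1 i ⊗ₜ[K] (r1 j ⊗ₜ[K] (b (r2 i) (r2 j)))) :=
  stmt5_general b hcomm r1 r2
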